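/- Every occurrence of z as a subword of u = u_n⋯u_1 contributes a monomial of degree at least n − |z| to (u choose z)_q whenever the occurrence uses the letter u_n. Consequently, if z occurs as a subword of the length-N prefix of a left-infinite word x, then for any n ≥ N−1 and any r < n + 1 − |z|, the coefficient of q^r in (x_n⋯x_0 choose z)_q depends only on x_{r+|z|−1}⋯x_0. -/
import Mathlib


open Polynomial

/-- q-binomial on reversed words: first list = word with rightmost letter first,
matching the recursion (ua choose vb)_q = (u choose vb)_q * q^{|vb|} + [a=b](u choose v)_q. -/
noncomputable def qBaux {α : Type*} [DecidableEq α] : List α → List α → Polynomial ℕ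
  | _, [] => 1
  | [], _ :: _ => 0
  | a :: u, b :: v =>
      qBaux u (b :: v) * X ^ (v.length + 1) + if a = b then qBaux u v else 0

/-- q-binomial coefficient of words `u`, `v` given in natural reading order. -/
noncomputable def qB {α : Type*} [DecidableEq α] (u v : List α) : Polynomial ℕ :=
  qBaux u.reverse v.reverse

/-- The prefix x_{n-1} ⋯ x_1 x_0 (length n, in natural reading order) of the
left-infinite word ⋯x_2 x_1 x_0. -/
def prefW {α : Type*} (x : ℕ → α) (n : ℕ) : List α :=
  ((List.range n).map x).reverse

-- sum of distinct positive naturals of card n is at least 1+2+...+n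
lemma sum_pos_card : ∀ (n : ℕ) (t : Finset ℕ), (∀ j ∈ t, 0 < j) → t.card = n →
    ∑ i ∈ Finset.range n, (i + 1) ≤ ∑ j ∈ t, j := by
  intro n
  induction n with
  | zero => intro t _ _; simp
  | succ n ih =>
    intro t hpos hcard
    have hne : t.Nonempty := by
      rw [← Finset.card_pos, hcard]; omega
    set M := t.max' hne with hM
    have hMmem : M ∈ t := t.max'_mem hne
    have hsub : t ⊆ Finset.Icc 1 M := by
      intro j hj
      simp only [Finset.mem_Icc]
      exact ⟨hpos j hj, t.le_max' j hj⟩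
    have hMn : n + 1 ≤ M := by
      have := Finset.card_le_card hsub
      rwa [Nat.card_Icc, hcard, Nat.add_sub_cancel] at this
    have hih := ih (t.erase M) (fun j hj => hpos j (Finset.mem_of_mem_erase hj))
      (by rw [Finset.card_erase_of_mem hMmem, hcard, Nat.add_sub_cancel])
    rw [Finset.sum_range_succ, ← Finset.add_sum_erase _ _ hMmem]
    omega

lemma part1 {α : Type*} [DecidableEq α] (u z : List α) (h : 0 < u.length)
    (s : Finset (Fin u.length))
    (hmap : (s.sort (· ≤ ·)).map u.get = z) (hmem : (⟨0, h⟩ : Fin u.length) ∈ s) :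
    u.length - z.length ≤
      (∑ i ∈ s, (u.length - (i : ℕ))) - z.length * (z.length + 1) / 2 := by
  have hm : z.length = s.card := by
    rw [← hmap, List.length_map, Finset.length_sort]
  set m := s.card with hmdef
  -- split off the term from 0
  have hS : (u.length - ((⟨0, h⟩ : Fin u.length) : ℕ)) + ∑ i ∈ s.erase ⟨0, h⟩, (u.length - (i : ℕ))
      = ∑ i ∈ s, (u.length - (i : ℕ)) :=
    Finset.add_sum_erase s (fun i : Fin u.length => u.length - (i : ℕ)) hmem
  set t := (s.erase ⟨0, h⟩).image (fun i : Fin u.length => u.length - (i : ℕ)) with ht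
  have hinj : ∀ i ∈ s.erase ⟨0, h⟩, ∀ j ∈ s.erase ⟨0, h⟩,
      u.length - (i : Fin u.length).val = u.length - (j : Fin u.length).val → i = j := by
    intro i _ j _ hij
    have hi := i.isLt
    have hj := j.isLt
    exact Fin.ext (by omega)
  have hsum_t : ∑ j ∈ t, j = ∑ i ∈ s.erase ⟨0, h⟩, (u.length - (i : ℕ)) :=
    Finset.sum_image hinj
  have hcard_t : t.card = m - 1 := by
    rw [ht, Finset.card_image_of_injOn (fun i hi j hj => hinj i hi j hj),
      Finset.card_erase_of_mem hmem]
  have hpos : ∀ j ∈ t, 0 < j := by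
    intro j hj
    rw [ht, Finset.mem_image] at hj
    obtain ⟨i, _, rfl⟩ := hj
    have := i.isLt
    omega
  have hkey := sum_pos_card (m - 1) t hpos hcard_t
  -- Gauss facts
  have hG : ∀ k : ℕ, (∑ i ∈ Finset.range k, (i + 1)) * 2 = k * (k + 1) := by
    intro k
    have := Finset.sum_range_id_mul_two (k + 1)
    rw [Finset.sum_range_succ'] at this
    simpa [Nat.add_sub_cancel, Nat.mul_comm] using this
  have hm1 : 1 ≤ m := Finset.card_pos.mpr ⟨_, hmem⟩
  have hGm : ∑ i ∈ Finset.range m, (i + 1)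
      = (∑ i ∈ Finset.range (m - 1), (i + 1)) + m := by
    have h3 : m = (m - 1) + 1 := by omega
    conv_lhs => rw [h3]
    rw [Finset.sum_range_succ]
    omega
  have hmL : m ≤ u.length := by
    have := Finset.card_le_univ s
    simpa [hmdef] using this
  rw [hm, ← hS, ← hsum_t]
  have h2 := hG m
  set A := m * (m + 1) with hA
  set G1 := ∑ i ∈ Finset.range (m - 1), (i + 1) with hG1
  set Gm := ∑ i ∈ Finset.range m, (i + 1) with hGm'
  set T := ∑ j ∈ t, j with hT
  simp only [Fin.val_mk, Nat.sub_zero]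
  omega


lemma qBaux_nil_right {α : Type*} [DecidableEq α] (u : List α) : qBaux u [] = 1 := by
  cases u <;> rfl

lemma qBaux_eq_zero {α : Type*} [DecidableEq α] :
    ∀ (u v : List α), u.length < v.length → qBaux u v = 0 := by
  intro u
  induction u with
  | nil => intro v hv; cases v with
    | nil => simp at hv
    | cons b v' => rfl
  | cons c u' ih =>
    intro v hv
    cases v with
    | nil => simp at hv
    | cons b v' =>
      simp only [List.length_cons] at hv
      rw [show qBaux (c :: u') (b :: v') =
          qBaux u' (b :: v') * X ^ (v'.length + 1) +
            if c = b then qBaux u' v' else 0 from rfl,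
        ih (b :: v') (by simp; omega), ih v' (by omega)]
      simp

lemma qBaux_snoc {α : Type*} [DecidableEq α] :
    ∀ (u v : List α) (a b : α),
      qBaux (u ++ [a]) (v ++ [b]) = qBaux u (v ++ [b]) +
        if a = b then qBaux u v * X ^ (u.length - v.length) else 0 := by
  intro u
  induction u with
  | nil =>
    intro v a b
    cases v with
    | nil => simp [qBaux, qBaux_nil_right]
    | cons d v' =>
      have h1 : qBaux ([a]) (d :: (v' ++ [b])) = 0 := qBaux_eq_zero _ _ (by simp)
      have h2 : qBaux ([] : List α) (d :: (v' ++ [b])) = 0 := qBaux_eq_zero _ _ (by simp)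
      have h3 : qBaux ([] : List α) (d :: v') = 0 := qBaux_eq_zero _ _ (by simp)
      simp only [List.nil_append, List.cons_append, h1, h2, h3, zero_mul, ite_self,
        zero_add, add_zero]
  | cons c u' ih =>
    intro v a b
    cases v with
    | nil =>
      have hih := ih [] a b
      simp only [List.nil_append, List.append_nil] at hih
      simp only [List.nil_append, List.cons_append]
      rw [show qBaux (c :: (u' ++ [a])) [b] =
          qBaux (u' ++ [a]) [b] * X ^ (0 + 1) +
            if c = b then qBaux (u' ++ [a]) [] else 0 from rfl,
        show qBaux (c :: u') [b] =
          qBaux u' [b] * X ^ (0 + 1) + if c = b then qBaux u' [] else 0 from rfl,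
        hih]
      simp only [qBaux_nil_right, List.length_cons, List.length_nil, Nat.sub_zero, zero_add, pow_one]
      split_ifs <;> ring
    | cons d v' =>
      have hih1 := ih (d :: v') a b
      have hih2 := ih v' a b
      simp only [List.cons_append] at hih1 ⊢
      rw [show qBaux (c :: (u' ++ [a])) (d :: (v' ++ [b])) =
          qBaux (u' ++ [a]) (d :: (v' ++ [b])) * X ^ ((v' ++ [b]).length + 1) +
            if c = d then qBaux (u' ++ [a]) (v' ++ [b]) else 0 from rfl,
        show qBaux (c :: u') (d :: (v' ++ [b])) =
          qBaux u' (d :: (v' ++ [b])) * X ^ ((v' ++ [b]).length + 1) +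
            if c = d then qBaux u' (v' ++ [b]) else 0 from rfl,
        show qBaux (c :: u') (d :: v') =
          qBaux u' (d :: v') * X ^ (v'.length + 1) +
            if c = d then qBaux u' v' else 0 from rfl,
        hih1, hih2]
      simp only [List.length_append, List.length_cons, List.length_nil,
        Nat.add_sub_add_right, zero_add]
      by_cases hlen : v'.length < u'.length
      · obtain ⟨k, hk⟩ : ∃ k, u'.length = v'.length + 1 + k :=
          ⟨u'.length - v'.length - 1, by omega⟩
        rw [hk]
        rw [show v'.length + 1 + k - (v'.length + 1) = k from by omega,
          show v'.length + 1 + k - v'.length = k + 1 from by omega]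
        split_ifs <;> ring
      · have hQ : qBaux u' (d :: v') = 0 := qBaux_eq_zero _ _ (by simp; omega)
        rw [hQ]
        split_ifs <;> ring

lemma qB_step {α : Type*} [DecidableEq α] (x : ℕ → α) (z : List α) (m r : ℕ)
    (hr : r + z.length ≤ m) :
    (qB (prefW x (m + 1)) z).coeff r = (qB (prefW x m) z).coeff r := by
  cases z with
  | nil => simp [qB, qBaux_nil_right]
  | cons b zt =>
    have hrev : (prefW x (m + 1)).reverse = (List.range m).map x ++ [x m] := by
      simp [prefW, List.range_succ]
    have hrev2 : (prefW x m).reverse = (List.range m).map x := by simp [prefW]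
    rw [qB, qB, hrev, hrev2, show (b :: zt).reverse = zt.reverse ++ [b] from by simp,
      qBaux_snoc, Polynomial.coeff_add]
    have h0 : (if x m = b then qBaux ((List.range m).map x) zt.reverse *
        X ^ (((List.range m).map x).length - zt.reverse.length) else 0).coeff r = 0 := by
      split_ifs
      · rw [Polynomial.coeff_mul_X_pow']
        rw [if_neg]
        simp only [List.length_map, List.length_range, List.length_reverse]
        simp only [List.length_cons] at hr
        omega
      · simp
    rw [h0, add_zero]

lemma qB_iter {α : Type*} [DecidableEq α] (x : ℕ → α) (z : List α) :
    ∀ (k m r : ℕ), r + z.length ≤ m →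
      (qB (prefW x (m + k)) z).coeff r = (qB (prefW x m) z).coeff r := by
  intro k
  induction k with
  | zero => intro m r _; rfl
  | succ k ih =>
    intro m r hr
    rw [show m + (k + 1) = (m + k) + 1 from rfl, qB_step x z (m + k) r (by omega),
      ih m r hr]

/-- (1) Any occurrence of z in u using the leftmost letter of u contributes a monomial of
degree at least |u| - |z|; (2) consequently, if z occurs in the length-N prefix of a
left-infinite word x then, for n ≥ N - 1 and r < n + 1 - |z|, the coefficient of q^r in
(x_n ⋯ x_0 choose z)_q only depends on x_{r+|z|-1} ⋯ x_0. -/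
theorem stmt15 {α : Type*} [DecidableEq α] :
    (∀ (u z : List α) (h : 0 < u.length) (s : Finset (Fin u.length)),
      (s.sort (· ≤ ·)).map u.get = z → (⟨0, h⟩ : Fin u.length) ∈ s →
        u.length - z.length ≤
          (∑ i ∈ s, (u.length - (i : ℕ))) - z.length * (z.length + 1) / 2) ∧
    (∀ (x x' : ℕ → α) (z : List α) (N n r : ℕ),
      z.Sublist (prefW x N) → z.Sublist (prefW x' N) →
      N - 1 ≤ n → r + z.length < n + 1 →
      (∀ i < r + z.length, x' i = x i) →
        (qB (prefW x (n + 1)) z).coeff r = (qB (prefW x' (n + 1)) z).coeff r) := by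
  constructor
  · exact part1
  · intro x x' z N n r _ _ _ hr hagree
    have h1 := qB_iter x z (n + 1 - (r + z.length)) (r + z.length) r le_rfl
    have h2 := qB_iter x' z (n + 1 - (r + z.length)) (r + z.length) r le_rfl
    have hpre : prefW x' (r + z.length) = prefW x (r + z.length) := by
      simp only [prefW]
      congr 1
      apply List.map_congr_left
      intro i hi
      exact hagree i (List.mem_range.mp hi)
    rw [show n + 1 = (r + z.length) + (n + 1 - (r + z.length)) from by omega,
      h1, h2, hpre]
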